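/- Let (M,J,θ) be a complete noncompact strictly pseudoconvex CR (2n+1)-manifold with nonnegative pseudohermitian Ricci curvature tensor and vanishing pseudohermitian torsion. Let f be a nonnegative locally Hölder continuous function and let u be a solution of the CR Poisson equation Δ_b u = f (obtained as in the existence theorem, with the corresponding two-sided estimates applied to u_0). If f_0 = 0 then u_0 = 0. -/
import Mathlib


/-!
Common abstract framework for pseudohermitian (CR) geometry.

Pseudohermitian geometry (Tanaka–Webster connection, sublaplacian, CR heat
kernel, real `(1,1)`-forms, `i∂_b∂̄_b`, …) is not available in Mathlib, so we
record the relevant data and geometric hypotheses abstractly as the fields of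
a structure.
-/

noncomputable section

open MeasureTheory Metric Filter Set Asymptotics

/-- Abstract data of a (strictly pseudoconvex) pseudohermitian CR `(2n+1)`-manifold
`(M, J, θ)` together with: its Carnot–Carathéodory distance (the `MetricSpace`
field), the volume measure `dμ = θ ∧ (dθ)ⁿ`, the sublaplacian `Δ_b`, the
pointwise norms of the subgradient `∇_b` and the subhessian `(∇^H)²`, the
derivative `u ↦ u₀ = Tu` along the characteristic vector field, the CR heat
kernel, the space of real `(1,1)`-forms with the operator `i∂_b∂̄_b`, the
pseudohermitian Ricci form, and the geometric hypotheses occurring in the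
paper (recorded as propositional fields). -/
structure CRManifold (n : ℕ) where
  /-- the underlying manifold -/
  M : Type
  /-- the Carnot–Carathéodory distance -/
  metric : MetricSpace M
  mble : MeasurableSpace M
  /-- the volume measure `dμ = θ ∧ (dθ)ⁿ` -/
  vol : Measure M
  /-- the sublaplacian `Δ_b` -/
  lapb : (M → ℝ) → (M → ℝ)
  /-- the pointwise norm `|∇_b u|` of the subgradient -/
  gradNorm : (M → ℝ) → (M → ℝ)
  /-- the pointwise norm `|(∇^H)² u|` of the subhessian -/
  hessNorm : (M → ℝ) → (M → ℝ)
  /-- derivative along the characteristic vector field: `u ↦ u₀ = T u` -/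
  T0 : (M → ℝ) → (M → ℝ)
  /-- the CR heat kernel `H(x,y,t)` of the CR heat equation `(∂/∂t − Δ_b)v = 0` -/
  heatKernel : M → M → ℝ → ℝ
  /-- smoothness predicate for functions on `M` -/
  smooth : (M → ℝ) → Prop
  /-- the space of real `(1,1)`-forms on `M` -/
  Form11 : Type
  form11Group : AddCommGroup Form11
  /-- the pointwise norm `‖ρ‖(x)` of a `(1,1)`-form -/
  formNorm : Form11 → M → ℝ
  /-- the trace of a `(1,1)`-form with respect to the Levi form -/
  formTrace : Form11 → M → ℝ
  /-- `ρ` is a (real) closed `(1,1)`-form -/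
  formClosed : Form11 → Prop
  /-- `ρ_{αβ̄,0} = 0`: the covariant derivative of `ρ` in the characteristic
  direction `T` vanishes -/
  formT0Zero : Form11 → Prop
  /-- `ρ` is nonnegative: the Hermitian matrix `(ρ_{αβ̄})` is positive
  semidefinite -/
  formNonneg : Form11 → Prop
  /-- the operator `u ↦ i ∂_b ∂̄_b u` -/
  iddb : (M → ℝ) → Form11
  /-- the pseudohermitian Ricci form `(R_{αβ̄})` -/
  Ric : Form11
  /-- the complex Hessian `(u_{αβ̄})` of a function, in a fixed unitary frame -/
  hess11 : (M → ℝ) → M → Matrix (Fin n) (Fin n) ℂ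
  /-- `u` is CR plurisubharmonic: `i ∂_b ∂̄_b u ≥ 0` -/
  CRPsh : (M → ℝ) → Prop
  /-- the assignment `x ↦ K(x) ⊆ T_x^{1,0} M` is a distribution on `M` -/
  IsDistribution : (M → Set (Fin n → ℂ)) → Prop
  /-- the second CR Yamabe soliton equation `f_{αα} + i A_{αα} f = 0` -/
  solitonEq : (M → ℝ) → Prop
  /-- `M` is complete -/
  complete : Prop
  /-- `M` is noncompact -/
  noncompact : Prop
  /-- `M` is strictly pseudoconvex -/
  strictlyPseudoconvex : Prop
  /-- the pseudohermitian Ricci curvature tensor is nonnegative -/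
  nonnegRicci : Prop
  /-- the pseudohermitian bisectional curvature is nonnegative -/
  nonnegBisectional : Prop
  /-- the pseudohermitian torsion vanishes -/
  vanishingTorsion : Prop
  /-- `M` is the CR flat space form -/
  flatSpaceForm : Prop

attribute [instance] CRManifold.metric CRManifold.mble CRManifold.form11Group

namespace CRManifold

variable {n : ℕ} (P : CRManifold n)

/-- `V_x(t)`: the volume of the Carnot–Carathéodory ball `B_x(t)`, as a real number. -/
def V (x : P.M) (t : ℝ) : ℝ := (P.vol (Metric.ball x t)).toReal

/-- `k_f(x,t) = (1/V_x(t)) ∫_{B_x(t)} f dμ`. -/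
def kf (f : P.M → ℝ) (x : P.M) (t : ℝ) : ℝ :=
  (∫ y in Metric.ball x t, f y ∂P.vol) / P.V x t

/-- the Green function `G(x,y) = ∫_0^∞ H(x,y,t) dt`. -/
def green (x y : P.M) : ℝ := ∫ t in Set.Ioi (0 : ℝ), P.heatKernel x y t

/-- `M` is nonparabolic: the minimal Green function exists (the defining
integral converges) and is positive off the diagonal. -/
def Nonparabolic : Prop :=
  ∀ x y : P.M, x ≠ y →
    MeasureTheory.IntegrableOn (P.heatKernel x y) (Set.Ioi (0 : ℝ)) ∧ 0 < P.green x y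

/-- the two-sided bound `σ⁻¹ r²(x,y)/V(B_x(r(x,y))) ≤ G(x,y) ≤ σ r²(x,y)/V(B_x(r(x,y)))`
for the minimal Green function. -/
def GreenBound (σ : ℝ) : Prop :=
  ∀ x y : P.M, x ≠ y →
    σ⁻¹ * (dist x y ^ 2 / P.V x (dist x y)) ≤ P.green x y ∧
      P.green x y ≤ σ * (dist x y ^ 2 / P.V x (dist x y))

/-- the heat semigroup `v(x,t) = ∫_M H(x,y,t) u(y) dμ(y)`. -/
def heatSol (u : P.M → ℝ) (x : P.M) (t : ℝ) : ℝ := ∫ y, P.heatKernel x y t * u y ∂P.vol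

/-- the Tanaka–Webster scalar curvature `W`, the trace of the pseudohermitian
Ricci form with respect to the Levi form. -/
def W : P.M → ℝ := P.formTrace P.Ric

/-- `(M,θ,f,μ)` is a CR Yamabe soliton: `f₀ + 2W = 2μ` together with the second
soliton equation `f_{αα} + i A_{αα} f = 0`. -/
def IsCRYamabeSoliton (f : P.M → ℝ) (μ : ℝ) : Prop :=
  P.smooth f ∧ (∀ x, P.T0 f x + 2 * P.W x = 2 * μ) ∧ P.solitonEq f

/-- `(M,θ)` is a gradient CR Yamabe soliton: there is a smooth `u` with
`Δ_b u = 2(W − μ)`. -/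
def IsGradientCRYamabeSoliton (μ : ℝ) : Prop :=
  ∃ u : P.M → ℝ, P.smooth u ∧ ∀ x, P.lapb u x = 2 * (P.W x - μ)

/-- the solution `u(x) = ∫_M (G(o,y) − G(x,y)) f(y) dμ(y)` of `Δ_b u = f`
constructed from the minimal Green function. -/
def greenSol (f : P.M → ℝ) (o x : P.M) : ℝ :=
  ∫ y, (P.green o y - P.green x y) * f y ∂P.vol

/-- the upper bound `α₁ r ∫_{2r}^∞ k(t) dt + β₁ ∫_0^{2r} t k(t) dt`, `r = r(x)`. -/
def poissonUpper (f : P.M → ℝ) (o x : P.M) (α₁ β₁ : ℝ) : ℝ :=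
  α₁ * dist o x * (∫ t in Set.Ioi (2 * dist o x), P.kf f o t) +
    β₁ * ∫ t in (0 : ℝ)..(2 * dist o x), t * P.kf f o t

/-- the lower bound
`−α₂ r ∫_{2r}^∞ k(t) dt − β₂ ∫_0^{εr} t k(x,t) dt + β₃ ∫_0^{2r} t k(t) dt`, `r = r(x)`. -/
def poissonLower (f : P.M → ℝ) (o x : P.M) (α₂ β₂ β₃ ε : ℝ) : ℝ :=
  -(α₂ * dist o x * (∫ t in Set.Ioi (2 * dist o x), P.kf f o t)) -
      β₂ * (∫ t in (0 : ℝ)..(ε * dist o x), t * P.kf f x t) +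
    β₃ * ∫ t in (0 : ℝ)..(2 * dist o x), t * P.kf f o t

/-- the null space `K(x) = {ω ∈ T_x^{1,0}M : v_{αβ̄}(x) ω^α = 0 for all β}` of
the complex Hessian of `v`. -/
def hessNull (v : P.M → ℝ) (x : P.M) : Set (Fin n → ℂ) :=
  {ω | ∀ β, ∑ α, P.hess11 v x α β * ω α = 0}

/-- the Euclidean heat kernel on `ℝ⁴`. -/
def euclHeat4 (a b : EuclideanSpace ℝ (Fin 4)) (t : ℝ) : ℝ :=
  ((4 * Real.pi * t) ^ 2)⁻¹ * Real.exp (-(dist a b ^ 2) / (4 * t))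

/-- the heat kernel of the Riemannian product `M̃ = M × ℝ⁴`. -/
def prodHeat (p q : P.M × EuclideanSpace ℝ (Fin 4)) (t : ℝ) : ℝ :=
  P.heatKernel p.1 q.1 t * euclHeat4 p.2 q.2 t

/-- the Riemannian product distance on `M̃ = M × ℝ⁴`. -/
def prodDist (p q : P.M × EuclideanSpace ℝ (Fin 4)) : ℝ :=
  Real.sqrt (dist p.1 q.1 ^ 2 + dist p.2 q.2 ^ 2)

/-- the metric ball of `M̃ = M × ℝ⁴`. -/
def prodBall (p : P.M × EuclideanSpace ℝ (Fin 4)) (r : ℝ) :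
    Set (P.M × EuclideanSpace ℝ (Fin 4)) :=
  {q | P.prodDist p q < r}

/-- the product volume measure on `M̃ = M × ℝ⁴`. -/
def prodVol : Measure (P.M × EuclideanSpace ℝ (Fin 4)) :=
  P.vol.prod MeasureTheory.volume

/-- the minimal Green function of `M̃ = M × ℝ⁴`. -/
def prodGreen (p q : P.M × EuclideanSpace ℝ (Fin 4)) : ℝ :=
  ∫ t in Set.Ioi (0 : ℝ), P.prodHeat p q t

/-- the solution of `Δ_b u = f` obtained via the product construction with `ℝ⁴`. -/
def prodSol (f : P.M → ℝ) (o x : P.M) : ℝ :=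
  ∫ q, (P.prodGreen (o, 0) q - P.prodGreen (x, 0) q) * f q.1 ∂P.prodVol

end CRManifold

/-- **Corollary (`f₀ = 0` implies `u₀ = 0`).** Let `(M,J,θ)` be a complete
noncompact strictly pseudoconvex CR `(2n+1)`-manifold with nonnegative
pseudohermitian Ricci curvature and vanishing torsion, `f ≥ 0` locally Hölder
continuous, and `u` a solution of `Δ_b u = f` obtained as in the existence
theorem (so that `u₀ = T u` satisfies the corresponding two-sided estimates
with `k̃` formed from `f₀ = T f`).  If `f₀ = 0` then `u₀ = 0`. -/
theorem T_derivative_of_solution_vanishes (n : ℕ) (P : CRManifold n)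
    (f u : P.M → ℝ) (o : P.M)
    (hcomplete : P.complete) (hnoncompact : P.noncompact)
    (hspc : P.strictlyPseudoconvex) (hric : P.nonnegRicci) (htor : P.vanishingTorsion)
    (hf : ∀ x, 0 ≤ f x)
    (hHolder : ∀ x : P.M, ∃ (C r : NNReal) (s : Set P.M),
      s ∈ nhds x ∧ 0 < r ∧ HolderOnWith C r f s)
    (hsol : ∀ x, P.lapb u x = f x)
    (hest : ∀ ε ∈ Set.Ioo (0 : ℝ) 1,
      ∃ α₁ > (0 : ℝ), ∃ α₂ > (0 : ℝ), ∃ β₁ > (0 : ℝ), ∃ β₂ > (0 : ℝ), ∃ β₃ > (0 : ℝ),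
        ∀ x : P.M,
          P.T0 u x ≤ P.poissonUpper (P.T0 f) o x α₁ β₁ ∧
          P.poissonLower (P.T0 f) o x α₂ β₂ β₃ ε ≤ P.T0 u x)
    (hf0 : ∀ x, P.T0 f x = 0) :
    ∀ x, P.T0 u x = 0 := by
  have hT0f : P.T0 f = fun _ => (0 : ℝ) := funext hf0
  have hkf : ∀ y t, P.kf (P.T0 f) y t = 0 := by
    intro y t
    simp [CRManifold.kf, hT0f]
  obtain ⟨α₁, -, α₂, -, β₁, -, β₂, -, β₃, -, hx⟩ :=
    hest (1 / 2) ⟨by norm_num, by norm_num⟩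
  intro x
  obtain ⟨hup, hlo⟩ := hx x
  have hU : P.poissonUpper (P.T0 f) o x α₁ β₁ = 0 := by
    simp [CRManifold.poissonUpper, hkf]
  have hL : P.poissonLower (P.T0 f) o x α₂ β₂ β₃ (1 / 2) = 0 := by
    simp [CRManifold.poissonLower, hkf]
  rw [hU] at hup
  rw [hL] at hlo
  linarith
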